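/- arXiv:math/9812155 — 3 statements merged into one kernel-verified Lean document; each statement's English description precedes it below -/
import Mathlib

section
/- If x and y are measurable functions on [0,1] and 0 < t, and the support of x is contained in [0, min(1, 1/t)], then for every s > 0 the distribution function of (σ_t x) ⊗ y equals t times the distribution function of x ⊗ y, where (x ⊗ y)(u,v) = x(u)y(v) on [0,1]² and σ_t x(u) = x(u/t)·χ_{[0,1]}(u/t). -/
open MeasureTheory Set Filter ENNReal

/-- Lebesgue measure restricted to `[0,1]`. -/
noncomputable def muI : Measure ℝ := volume.restrict (Set.Icc (0:ℝ) 1)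

/-- Lebesgue measure on the square `[0,1]²`. -/
noncomputable def muI2 : Measure (ℝ × ℝ) := muI.prod muI

/-- Distribution function `n_f(τ) = μ{w : |f w| > τ}`. -/
noncomputable def distrib {α : Type*} [MeasurableSpace α] (μ : Measure α) (f : α → ℝ)
    (τ : ℝ) : ℝ≥0∞ :=
  μ {w | τ < |f w|}

/-- Non-increasing rearrangement of `f` with respect to `μ`. -/
noncomputable def rearr {α : Type*} [MeasurableSpace α] (μ : Measure α) (f : α → ℝ)
    (t : ℝ) : ℝ :=
  sInf {τ : ℝ | 0 ≤ τ ∧ distrib μ f τ ≤ ENNReal.ofReal t}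

/-- Tensor product `(x ⊗ y)(s,t) = x s * y t`. -/
def tensor (x y : ℝ → ℝ) : ℝ × ℝ → ℝ := fun p => x p.1 * y p.2

/-- Dilation operator `σ_t x (u) = x(u/t) χ_{[0,1]}(u/t)`. -/
noncomputable def dil (t : ℝ) (x : ℝ → ℝ) : ℝ → ℝ :=
  fun u => x (u / t) * (Set.Icc (0:ℝ) 1).indicator (fun _ => (1:ℝ)) (u / t)

instance : SigmaFinite muI := by unfold muI; infer_instance

lemma dil_measurable {t : ℝ} (ht : 0 < t) {x : ℝ → ℝ} (hx : Measurable x) :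
    Measurable (dil t x) := by
  apply Measurable.mul
  · exact hx.comp (measurable_id.div_const t)
  · exact (measurable_const.indicator measurableSet_Icc).comp (measurable_id.div_const t)

lemma onedim {x : ℝ → ℝ} (hx : Measurable x) {t : ℝ} (ht : 0 < t)
    (hsupp : ∀ u, x u ≠ 0 → u ∈ Set.Icc (0:ℝ) (min 1 (1/t)))
    (c s : ℝ) (hs : 0 < s) :
    muI {u | s < |dil t x u * c|} = ENNReal.ofReal t * muI {u | s < |x u * c|} := by
  set B : Set ℝ := {u | s < |x u * c|} with hB
  have hBmeas : MeasurableSet B := measurableSet_lt measurable_const (hx.mul_const c).abs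
  have hBsub : B ⊆ Set.Icc (0:ℝ) (min 1 (1/t)) := by
    intro u hu
    apply hsupp
    intro h
    simp only [hB, Set.mem_setOf_eq, h, zero_mul, abs_zero] at hu
    exact absurd hu (not_lt.2 hs.le)
  have hset : {u | s < |dil t x u * c|} = (fun u => t⁻¹ * u) ⁻¹' B := by
    ext u
    simp only [Set.mem_setOf_eq, Set.mem_preimage, hB, dil]
    constructor
    · intro h
      have hx0 : x (u / t) ≠ 0 := by
        rintro h0
        simp [h0] at h
        exact absurd h (not_lt.2 hs.le)
      have : u / t ∈ Set.Icc (0:ℝ) 1 := by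
        have := hsupp _ hx0
        exact ⟨this.1, this.2.trans (min_le_left _ _)⟩
      rw [Set.indicator_of_mem this] at h
      simp only [mul_one] at h
      rw [show t⁻¹ * u = u / t by ring]
      exact h
    · intro h
      rw [show t⁻¹ * u = u / t by ring] at h
      have hx0 : x (u / t) ≠ 0 := by
        rintro h0
        simp only [Set.mem_setOf_eq, h0, zero_mul, abs_zero] at h
        exact absurd h (not_lt.2 hs.le)
      have hmem : u / t ∈ Set.Icc (0:ℝ) 1 := by
        have := hsupp _ hx0
        exact ⟨this.1, this.2.trans (min_le_left _ _)⟩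
      rw [Set.indicator_of_mem hmem, mul_one]
      exact h
  have hBsub1 : B ⊆ Set.Icc (0:ℝ) 1 := fun u hu =>
    ⟨(hBsub hu).1, (hBsub hu).2.trans (min_le_left _ _)⟩
  have hSsub : (fun u => t⁻¹ * u) ⁻¹' B ⊆ Set.Icc (0:ℝ) 1 := by
    intro u hu
    have h1 := hBsub hu
    constructor
    · have h0 : 0 ≤ t⁻¹ * u := h1.1
      have : u = t * (t⁻¹ * u) := by field_simp
      rw [this]
      exact mul_nonneg ht.le h0
    · have h2 : t⁻¹ * u ≤ 1 / t := h1.2.trans (min_le_right _ _)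
      have : u / t ≤ 1 / t := by rw [div_eq_inv_mul]; exact h2
      exact (div_le_div_iff_of_pos_right ht).1 this
  rw [hB] at hset ⊢
  unfold muI
  rw [hset, Measure.restrict_apply', Set.inter_eq_left.2 hSsub,
    Measure.restrict_apply', Set.inter_eq_left.2 hBsub1,
    Real.volume_preimage_mul_left (by positivity : t⁻¹ ≠ 0),
    inv_inv, abs_of_pos ht]
  · exact measurableSet_Icc
  · exact measurableSet_Icc

theorem dilation_tensor_distrib (x y : ℝ → ℝ) (hx : Measurable x) (hy : Measurable y)
    (t : ℝ) (ht : 0 < t)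
    (hsupp : ∀ u, x u ≠ 0 → u ∈ Set.Icc (0:ℝ) (min 1 (1/t))) :
    ∀ s : ℝ, 0 < s →
      distrib muI2 (tensor (dil t x) y) s = ENNReal.ofReal t * distrib muI2 (tensor x y) s := by
  intro s hs
  have hdx : Measurable (dil t x) := dil_measurable ht hx
  have hmeas1 : MeasurableSet {p : ℝ × ℝ | s < |tensor (dil t x) y p|} :=
    measurableSet_lt measurable_const
      (((hdx.comp measurable_fst).mul (hy.comp measurable_snd)).abs)
  have hmeas2 : MeasurableSet {p : ℝ × ℝ | s < |tensor x y p|} :=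
    measurableSet_lt measurable_const
      (((hx.comp measurable_fst).mul (hy.comp measurable_snd)).abs)
  unfold distrib muI2
  rw [Measure.prod_apply_symm hmeas1, Measure.prod_apply_symm hmeas2,
    ← lintegral_const_mul' _ _ (by simp : ENNReal.ofReal t ≠ ⊤)]
  congr 1
  ext v
  have := onedim hx ht hsupp (y v) s hs
  simpa [tensor] using this
end

section
/- Let E be a symmetric space on [0,1] and M(E) its multiplicator with respect to tensor product. Then for every t ∈ (0,1], the fundamental function of M(E) satisfies φ_{M(E)}(t) = ‖σ_t‖_{E→E}, where φ_{M(E)}(t) = ‖χ_{(0,t)}‖_{M(E)} and σ_t is the dilation operator. -/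
open MeasureTheory Set Filter ENNReal

/-- A symmetric (rearrangement invariant) Banach function space on `[0,1]`. -/
structure SymmetricSpace where
  Mem : (ℝ → ℝ) → Prop
  N : (ℝ → ℝ) → ℝ
  N_nonneg : ∀ f, 0 ≤ N f
  add_mem : ∀ f g, Mem f → Mem g → Mem (f + g)
  smul_mem : ∀ (c : ℝ) (f), Mem f → Mem (c • f)
  N_add_le : ∀ f g, Mem f → Mem g → N (f + g) ≤ N f + N g
  N_smul : ∀ (c : ℝ) (f), N (c • f) = |c| * N f
  mono_mem : ∀ f g, Mem g → (∀ᵐ u ∂muI, |f u| ≤ |g u|) → Mem f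
  mono_norm : ∀ f g, Mem g → (∀ᵐ u ∂muI, |f u| ≤ |g u|) → N f ≤ N g
  symm_mem : ∀ f g, Mem g → (∀ τ : ℝ, 0 < τ → distrib muI f τ = distrib muI g τ) → Mem f
  symm_norm : ∀ f g, Mem g → (∀ τ : ℝ, 0 < τ → distrib muI f τ = distrib muI g τ) → N f = N g
  const_mem : Mem (fun _ => (1:ℝ))

/-- Membership in `E(I×I)`: the rearrangement of `z` belongs to `E`. -/
def Mem2 (E : SymmetricSpace) (z : ℝ × ℝ → ℝ) : Prop := E.Mem (rearr muI2 z)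

/-- Norm in `E(I×I)`. -/
noncomputable def N2 (E : SymmetricSpace) (z : ℝ × ℝ → ℝ) : ℝ := E.N (rearr muI2 z)

/-- Membership in the multiplicator space `M(E)`. -/
def MMem (E : SymmetricSpace) (x : ℝ → ℝ) : Prop := ∀ y, E.Mem y → Mem2 E (tensor x y)

/-- Norm in the multiplicator space `M(E)`. -/
noncomputable def MN (E : SymmetricSpace) (x : ℝ → ℝ) : ℝ :=
  sSup {r : ℝ | ∃ y, E.Mem y ∧ E.N y ≤ 1 ∧ r = N2 E (tensor x y)}

/-- Operator norm of the dilation `σ_t : E → E`. -/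
noncomputable def opN (E : SymmetricSpace) (t : ℝ) : ℝ :=
  sSup {r : ℝ | ∃ y, E.Mem y ∧ E.N y ≤ 1 ∧ r = E.N (dil t y)}

/-- Operator norm of the dilation `σ_t : M(E) → M(E)`. -/
noncomputable def MopN (E : SymmetricSpace) (t : ℝ) : ℝ :=
  sSup {r : ℝ | ∃ x, MMem E x ∧ MN E x ≤ 1 ∧ r = MN E (dil t x)}

/-!
Write `x = χ_(0,t]`. For `τ > 0` both `x ⊗ y` and `σ_t y` have distribution `t · n_y(τ)`, so
`‖x ⊗ y‖_{E(I×I)} = ‖σ_t y‖_E` for every `y ∈ E`, and `φ_{M(E)}(t)` and `‖σ_t‖` are suprema of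
the same set. Since `y` need not be measurable, `n_y` is an outer measure and
`n_y(∞) = lim n_y(τ)` may be positive, while a rearrangement, being finite, forgets it. So split
`y` along a measurable hull of that mass at infinity. Off the hull `y` has none, and `σ_t` of that
part lies in `E` because its rearrangement is dominated by that of `y`. On the hull the
distribution of `σ_t y` is constant, and a function with constant distribution is
equimeasurable with its double, hence has norm zero.
-/

noncomputable def distribAtTop {α : Type*} [MeasurableSpace α] (μ : Measure α) (f : α → ℝ) : ℝ≥0∞ :=
  ⨅ k : ℕ, distrib μ f k

lemma iInf_tsub_iInf_self {ι : Type*} {f : ι → ℝ≥0∞} (hf : ⨅ i, f i ≠ ∞) :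
    ⨅ i, (f i - ⨅ j, f j) = 0 := by
  refine le_antisymm (ENNReal.le_of_forall_pos_le_add fun ε hε _ => ?_) bot_le
  obtain ⟨i, hi⟩ := iInf_lt_iff.1 (ENNReal.lt_add_right hf (ENNReal.coe_ne_zero.2 hε.ne'))
  calc ⨅ i, (f i - ⨅ j, f j) ≤ f i - ⨅ j, f j := iInf_le _ i
    _ ≤ 0 + ε := by rw [zero_add, tsub_le_iff_left]; exact hi.le

section Rearrangement

variable {α : Type*} [MeasurableSpace α] {μ : Measure α} {f : α → ℝ}

lemma distrib_antitone (μ : Measure α) (f : α → ℝ) : Antitone (distrib μ f) :=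
  fun _ _ h => measure_mono fun _ hw => lt_of_le_of_lt h hw

lemma distribAtTop_le_distrib (τ : ℝ) : distribAtTop μ f ≤ distrib μ f τ :=
  (iInf_le _ ⌈τ⌉₊).trans (distrib_antitone μ f (Nat.le_ceil τ))

lemma distrib_le_of_forall_lt {s : ℝ} {a : ℝ≥0∞} (h : ∀ σ, s < σ → distrib μ f σ ≤ a) :
    distrib μ f s ≤ a := by
  have hunion : {w | s < |f w|} = ⋃ k : ℕ, {w | s + 1 / ((k : ℝ) + 1) < |f w|} := by
    ext w
    simp only [mem_ofPred_eq, mem_iUnion]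
    refine ⟨fun hw => ?_, fun ⟨k, hk⟩ => by linarith [Nat.one_div_pos_of_nat (α := ℝ) (n := k)]⟩
    obtain ⟨k, hk⟩ := exists_nat_one_div_lt (sub_pos.2 hw)
    exact ⟨k, by linarith⟩
  have hmono : Monotone fun k : ℕ => {w | s + 1 / ((k : ℝ) + 1) < |f w|} :=
    fun k l hkl w (hw : s + 1 / ((k : ℝ) + 1) < |f w|) =>
      show s + 1 / ((l : ℝ) + 1) < |f w| by linarith [Nat.one_div_le_one_div (α := ℝ) hkl]
  rw [distrib, hunion, hmono.measure_iUnion]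
  exact iSup_le fun k => h _ (lt_add_of_pos_right s Nat.one_div_pos_of_nat)

lemma distrib_indicator (W : Set α) (f : α → ℝ) {τ : ℝ} (hτ : 0 ≤ τ) :
    distrib μ (W.indicator f) τ = μ ({w | τ < |f w|} ∩ W) := by
  rw [distrib]
  congr 1
  ext w
  by_cases hw : w ∈ W <;> simp [hw, hτ.not_gt]

lemma rearr_nonneg (μ : Measure α) (f : α → ℝ) (u : ℝ) : 0 ≤ rearr μ f u :=
  Real.sInf_nonneg fun _ hσ => hσ.1

lemma rearr_le_of_distrib_le {τ u : ℝ} (hτ : 0 ≤ τ) (h : distrib μ f τ ≤ ENNReal.ofReal u) :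
    rearr μ f u ≤ τ :=
  csInf_le ⟨0, fun _ hσ => hσ.1⟩ ⟨hτ, h⟩

lemma distribAtTop_le_of_lt_rearr {τ u : ℝ} (hτ : 0 ≤ τ) (h : τ < rearr μ f u) :
    distribAtTop μ f ≤ ENNReal.ofReal u := by
  obtain ⟨σ, -, hσ⟩ : {σ : ℝ | 0 ≤ σ ∧ distrib μ f σ ≤ ENNReal.ofReal u}.Nonempty := by
    by_contra hempty
    rw [not_nonempty_iff_eq_empty] at hempty
    rw [rearr, hempty, Real.sInf_empty] at h
    linarith
  exact (distribAtTop_le_distrib σ).trans hσ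

lemma lt_rearr {τ u : ℝ} (hd : distribAtTop μ f < ENNReal.ofReal u)
    (hc : ENNReal.ofReal u < distrib μ f τ) : τ < rearr μ f u := by
  set S := {σ : ℝ | 0 ≤ σ ∧ distrib μ f σ ≤ ENNReal.ofReal u}
  have hS : S.Nonempty := by
    obtain ⟨k, hk⟩ := iInf_lt_iff.1 hd
    exact ⟨k, k.cast_nonneg, hk.le⟩
  have hinf : distrib μ f (sInf S) ≤ ENNReal.ofReal u := distrib_le_of_forall_lt fun σ hσ => by
    obtain ⟨σ', hσ'S, hσ'⟩ := exists_lt_of_csInf_lt hS hσ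
    exact (distrib_antitone μ f hσ'.le).trans hσ'S.2
  by_contra! hle
  exact hc.not_ge ((distrib_antitone μ f hle).trans hinf)

lemma rearr_le_rearr {g : α → ℝ} (h : ∀ τ, 0 ≤ τ → distrib μ f τ ≤ distrib μ g τ)
    (hg : distribAtTop μ g = 0) {u : ℝ} (hu : 0 < u) : rearr μ f u ≤ rearr μ g u := by
  refine csInf_le_csInf ⟨0, fun _ hσ => hσ.1⟩ ?_ fun σ hσ => ⟨hσ.1, (h σ hσ.1).trans hσ.2⟩
  obtain ⟨k, hk⟩ := iInf_lt_iff.1 (hg.trans_lt (ENNReal.ofReal_pos.2 hu))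
  exact ⟨k, k.cast_nonneg, hk.le⟩

end Rearrangement

lemma muI_apply (s : Set ℝ) : muI s = volume (s ∩ Icc 0 1) :=
  Measure.restrict_apply' measurableSet_Icc

instance : IsProbabilityMeasure muI := ⟨by simp [muI_apply, Real.volume_Icc]⟩

instance : IsProbabilityMeasure muI2 := by
  unfold muI2
  infer_instance

lemma muI_Iic_zero : muI (Iic 0) = 0 := by
  rw [muI_apply]
  exact measure_mono_null (fun u ⟨hu, hu0, _⟩ => le_antisymm hu hu0) Real.volume_singleton

lemma ae_muI_pos : ∀ᵐ u ∂muI, 0 < u := by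
  simp_rw [ae_iff, not_lt]
  exact muI_Iic_zero

lemma muI_le_volume (s : Set ℝ) : muI s ≤ volume s :=
  Measure.restrict_apply_le _ s

lemma muI_ofReal_mem_Ico_le {a c : ℝ≥0∞} (ha : a ≠ ∞) (hc : c ≠ ∞) :
    muI {u | ENNReal.ofReal u ∈ Ico a c} ≤ c - a := by
  have hsub : {u | ENNReal.ofReal u ∈ Ico a c} ∩ Icc 0 1 ⊆ Ico a.toReal c.toReal :=
    fun u ⟨⟨h1, h2⟩, h0, _⟩ => ⟨(ENNReal.le_ofReal_iff_toReal_le ha h0).1 h1,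
      (ENNReal.ofReal_lt_iff_lt_toReal h0 hc).1 h2⟩
  calc muI _ ≤ volume (Ico a.toReal c.toReal) := by rw [muI_apply]; exact measure_mono hsub
    _ = c - a := by
      rw [Real.volume_Ico, ENNReal.ofReal_sub _ ENNReal.toReal_nonneg, ENNReal.ofReal_toReal hc,
        ENNReal.ofReal_toReal ha]

lemma le_muI_ofReal_mem_Ioo {a c : ℝ≥0∞} (hc : c ≤ 1) :
    c - a ≤ muI {u | ENNReal.ofReal u ∈ Ioo a c} := by
  rcases eq_or_ne a ∞ with rfl | ha
  · simp
  have hc' : c ≠ ∞ := ne_top_of_le_ne_top one_ne_top hc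
  have hsub : Ioo a.toReal c.toReal ⊆ {u | ENNReal.ofReal u ∈ Ioo a c} ∩ Icc 0 1 := by
    rintro u ⟨h1, h2⟩
    have h0 : 0 ≤ u := ENNReal.toReal_nonneg.trans h1.le
    refine ⟨⟨(ENNReal.lt_ofReal_iff_toReal_lt ha).2 h1,
      (ENNReal.ofReal_lt_iff_lt_toReal h0 hc').2 h2⟩, h0, ?_⟩
    exact h2.le.trans (ENNReal.toReal_le_of_le_ofReal zero_le_one (by simpa using hc))
  calc c - a = volume (Ioo a.toReal c.toReal) := by
        rw [Real.volume_Ioo, ENNReal.ofReal_sub _ ENNReal.toReal_nonneg,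
          ENNReal.ofReal_toReal hc', ENNReal.ofReal_toReal ha]
    _ ≤ muI _ := by rw [muI_apply]; exact measure_mono hsub

theorem distrib_rearr {α : Type*} [MeasurableSpace α] {μ : Measure α} (hμ : μ univ ≤ 1)
    (f : α → ℝ) {τ : ℝ} (hτ : 0 ≤ τ) :
    distrib muI (rearr μ f) τ = distrib μ f τ - distribAtTop μ f := by
  have hc : distrib μ f τ ≤ 1 := (measure_mono (subset_univ _)).trans hμ
  have hc' : distrib μ f τ ≠ ∞ := ne_top_of_le_ne_top one_ne_top hc
  have hupper : {u | τ < |rearr μ f u|} ⊆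
      {u | ENNReal.ofReal u ∈ Ico (distribAtTop μ f) (distrib μ f τ)} := by
    intro u hu
    rw [mem_ofPred_eq, abs_of_nonneg (rearr_nonneg μ f u)] at hu
    exact ⟨distribAtTop_le_of_lt_rearr hτ hu,
      lt_of_not_ge fun h => (rearr_le_of_distrib_le hτ h).not_gt hu⟩
  have hlower : {u | ENNReal.ofReal u ∈ Ioo (distribAtTop μ f) (distrib μ f τ)} ⊆
      {u | τ < |rearr μ f u|} := fun u hu => by
    rw [mem_ofPred_eq, abs_of_nonneg (rearr_nonneg μ f u)]
    exact lt_rearr hu.1 hu.2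
  refine le_antisymm ((measure_mono hupper).trans (muI_ofReal_mem_Ico_le ?_ hc'))
    ((le_muI_ofReal_mem_Ioo hc).trans (measure_mono hlower))
  exact ne_top_of_le_ne_top hc' (distribAtTop_le_distrib τ)

lemma distrib_rearr_of_distribAtTop_eq_zero {α : Type*} [MeasurableSpace α] {μ : Measure α}
    (hμ : μ univ ≤ 1) {f : α → ℝ} (hf : distribAtTop μ f = 0) {τ : ℝ} (hτ : 0 ≤ τ) :
    distrib muI (rearr μ f) τ = distrib μ f τ := by
  rw [distrib_rearr hμ f hτ, hf, tsub_zero]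

lemma dil_add (t : ℝ) (f g : ℝ → ℝ) : dil t (f + g) = dil t f + dil t g :=
  funext fun u => by simp only [dil, Pi.add_apply, add_mul]

lemma distrib_dil {t : ℝ} (ht : 0 < t) (ht1 : t ≤ 1) (w : ℝ → ℝ) {τ : ℝ} (hτ : 0 ≤ τ) :
    distrib muI (dil t w) τ = ENNReal.ofReal t * distrib muI w τ := by
  set B := {v | τ < |w v|} ∩ Icc (0 : ℝ) 1
  have hset : {u | τ < |dil t w u|} = (· * t⁻¹) ⁻¹' B := by
    ext u
    simp only [dil, mem_ofPred_eq, mem_preimage, ← div_eq_mul_inv, B, mem_inter_iff]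
    by_cases h : u / t ∈ Icc (0 : ℝ) 1 <;> simp [h, hτ.not_gt]
  have hsub : (· * t⁻¹) ⁻¹' B ⊆ Icc 0 1 :=
    fun u ⟨_, (h0 : 0 ≤ u * t⁻¹), (h1 : u * t⁻¹ ≤ 1)⟩ =>
      ⟨(mul_nonneg_iff_of_pos_right (inv_pos.2 ht)).1 h0,
        ((mul_inv_le_iff₀ ht).1 h1).trans (by rwa [one_mul])⟩
  rw [distrib, hset, muI_apply, inter_eq_left.2 hsub,
    Real.volume_preimage_mul_right (inv_ne_zero ht.ne'), inv_inv, abs_of_pos ht, distrib,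
    muI_apply]

lemma distrib_tensor_indicator_Ioc {t : ℝ} (ht1 : t ≤ 1) (y : ℝ → ℝ) {τ : ℝ} (hτ : 0 ≤ τ) :
    distrib muI2 (tensor ((Ioc (0 : ℝ) t).indicator fun _ => 1) y) τ
      = ENNReal.ofReal t * distrib muI y τ := by
  have hset : {w : ℝ × ℝ | τ < |tensor ((Ioc (0 : ℝ) t).indicator fun _ => 1) y w|}
      = Ioc 0 t ×ˢ {u | τ < |y u|} := by
    ext ⟨a, b⟩
    by_cases ha : a ∈ Ioc (0 : ℝ) t <;> simp [tensor, ha, hτ.not_gt]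
  have hsub : Ioc (0 : ℝ) t ⊆ Icc 0 1 := fun u hu => ⟨hu.1.le, hu.2.trans ht1⟩
  rw [distrib, hset, muI2, Measure.prod_prod, muI_apply, inter_eq_left.2 hsub, Real.volume_Ioc,
    sub_zero, distrib]

lemma distribAtTop_tensor_indicator_Ioc {t : ℝ} (ht1 : t ≤ 1) (y : ℝ → ℝ) :
    distribAtTop muI2 (tensor ((Ioc (0 : ℝ) t).indicator fun _ => 1) y)
      = ENNReal.ofReal t * distribAtTop muI y := by
  simp_rw [distribAtTop, distrib_tensor_indicator_Ioc ht1 y (Nat.cast_nonneg _)]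
  exact (ENNReal.mul_iInf fun h => absurd h ENNReal.ofReal_ne_top).symm

namespace SymmetricSpace

variable (E : SymmetricSpace)

lemma mem_indicator {y : ℝ → ℝ} (hy : E.Mem y) (s : Set ℝ) : E.Mem (s.indicator y) :=
  E.mono_mem _ y hy (ae_of_all _ fun u => by
    simpa only [Real.norm_eq_abs] using norm_indicator_le_norm_self y u)

lemma mem_of_distrib_le {f g : ℝ → ℝ} (hg : E.Mem g) (hg0 : distribAtTop muI g = 0)
    (h : ∀ τ, 0 ≤ τ → distrib muI f τ ≤ distrib muI g τ) : E.Mem f := by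
  have hf0 : distribAtTop muI f = 0 :=
    le_antisymm (hg0 ▸ iInf_mono fun k => h k k.cast_nonneg) bot_le
  have hrg : E.Mem (rearr muI g) := E.symm_mem _ g hg fun τ hτ =>
    distrib_rearr_of_distribAtTop_eq_zero prob_le_one hg0 hτ.le
  have hrf : E.Mem (rearr muI f) := E.mono_mem _ _ hrg (ae_muI_pos.mono fun u hu => by
    rw [abs_of_nonneg (rearr_nonneg _ _ _), abs_of_nonneg (rearr_nonneg _ _ _)]
    exact rearr_le_rearr h hg0 hu)
  exact E.symm_mem f _ hrf fun τ hτ =>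
    (distrib_rearr_of_distribAtTop_eq_zero prob_le_one hf0 hτ.le).symm

lemma norm_eq_zero_of_distrib_const {f : ℝ → ℝ} (hf : E.Mem f) {c : ℝ≥0∞}
    (h : ∀ τ, 0 < τ → distrib muI f τ = c) : E.N f = 0 := by
  have h2 : E.N ((2 : ℝ) • f) = E.N f := E.symm_norm _ f hf fun τ hτ => by
    have hset : {u | τ < |((2 : ℝ) • f) u|} = {u | τ / 2 < |f u|} := by
      ext u
      simp only [mem_ofPred_eq, Pi.smul_apply, smul_eq_mul, abs_mul, abs_two]
      constructor <;> intro <;> linarith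
    rw [distrib, hset, ← distrib, h _ (half_pos hτ), h τ hτ]
  rw [E.N_smul, abs_two] at h2
  linarith [E.N_nonneg f]

lemma norm_add_of_norm_eq_zero {f p : ℝ → ℝ} (hf : E.Mem f) (hp : E.Mem p) (hp0 : E.N p = 0) :
    E.N (f + p) = E.N f := by
  refine le_antisymm (by simpa [hp0] using E.N_add_le f p hf hp) ?_
  have h := E.N_add_le (f + p) ((-1 : ℝ) • p) (E.add_mem f p hf hp) (E.smul_mem _ p hp)
  rwa [E.N_smul, hp0, mul_zero, add_zero, neg_one_smul, add_neg_cancel_right] at h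

end SymmetricSpace

lemma exists_muI_inter_Iic_eq (A : Set ℝ) {t : ℝ} (ht1 : t ≤ 1) :
    ∃ s, muI (A ∩ Iic s) = ENNReal.ofReal t * muI A := by
  have hcont : Continuous fun s => muI (A ∩ Iic s) := by
    refine continuous_of_le_add_edist 1 one_ne_top fun x y => ?_
    have hsub : A ∩ Iic x ⊆ (A ∩ Iic y) ∪ Ioc y x := fun u ⟨hA, hu⟩ =>
      (le_or_gt u y).imp (fun h => ⟨hA, h⟩) fun h => ⟨h, hu⟩
    calc muI (A ∩ Iic x) ≤ muI (A ∩ Iic y) + volume (Ioc y x) :=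
          (measure_mono hsub).trans
            ((measure_union_le _ _).trans (add_le_add le_rfl (muI_le_volume _)))
      _ ≤ muI (A ∩ Iic y) + 1 * edist x y := by
          rw [Real.volume_Ioc, one_mul, edist_dist, Real.dist_eq]
          gcongr
          exact le_abs_self _
  have h0 : muI (A ∩ Iic 0) = 0 := measure_mono_null inter_subset_right muI_Iic_zero
  have h1 : muI (A ∩ Iic 1) = muI A := by
    refine measure_inter_conull ?_
    rw [compl_Iic, muI_apply]
    exact measure_mono_null (fun u ⟨h1, _, h2⟩ => absurd h2 (not_le.2 h1)) measure_empty
  obtain ⟨s, -, hs⟩ := intermediate_value_Icc zero_le_one hcont.continuousOn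
    (show ENNReal.ofReal t * muI A ∈ Icc (muI (A ∩ Iic 0)) (muI (A ∩ Iic 1)) by
      rw [h0, h1]
      exact ⟨zero_le, mul_le_of_le_one_left zero_le (ENNReal.ofReal_le_one.2 ht1)⟩)
  exact ⟨s, hs⟩

section InfiniteLevel

variable (y : ℝ → ℝ)

/-- A measurable hull of the set where `|y|` exceeds every level in the sense of outer measure;
it is nonnull only for nonmeasurable `y`. -/
noncomputable def infiniteLevel : Set ℝ := ⋂ k : ℕ, toMeasurable muI {u | (k : ℝ) < |y u|}

lemma measurableSet_infiniteLevel : MeasurableSet (infiniteLevel y) :=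
  MeasurableSet.iInter fun _ => measurableSet_toMeasurable _ _

lemma muI_infiniteLevel : muI (infiniteLevel y) = distribAtTop muI y := by
  rw [infiniteLevel, measure_iInter_eq_iInf_measure_iInter_le
    (fun _ => (measurableSet_toMeasurable _ _).nullMeasurableSet) ⟨0, measure_ne_top _ _⟩]
  refine iInf_congr fun k => le_antisymm ?_ ?_
  · calc _ ≤ muI (toMeasurable muI {u | (k : ℝ) < |y u|}) :=
          measure_mono (iInter_subset_of_subset k (iInter_subset _ le_rfl))
      _ = distrib muI y k := measure_toMeasurable _
  · refine measure_mono (subset_iInter₂ fun j (hj : j ≤ k) => ?_)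
    refine subset_trans (fun u (hu : (k : ℝ) < |y u|) => ?_) (subset_toMeasurable _ _)
    exact lt_of_le_of_lt (Nat.cast_le.2 hj) hu

lemma muI_setOf_lt_abs_inter {W : Set ℝ} (hW : MeasurableSet W) (hWy : W ⊆ infiniteLevel y)
    (τ : ℝ) : muI ({u | τ < |y u|} ∩ W) = muI W := by
  set T := toMeasurable muI {u | τ < |y u|}
  have hT : MeasurableSet T := measurableSet_toMeasurable _ _
  have hnull : muI (W \ T) = 0 := by
    refine measure_mono_null (sdiff_subset_sdiff_left
      (hWy.trans (iInter_subset _ ⌈τ⌉₊))) ?_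
    rw [sdiff_eq, Measure.measure_toMeasurable_inter hT.compl (measure_ne_top _ _)]
    refine measure_mono_null (fun u ⟨(hu : (⌈τ⌉₊ : ℝ) < |y u|), huT⟩ => huT ?_) measure_empty
    exact subset_toMeasurable _ _ ((Nat.le_ceil τ).trans_lt hu)
  rw [← Measure.measure_toMeasurable_inter hW (measure_ne_top _ _), inter_comm]
  exact measure_inter_conull' hnull

variable {y}

lemma distribAtTop_muI_ne_top : distribAtTop muI y ≠ ∞ :=
  ((distribAtTop_le_distrib 0).trans_lt (measure_lt_top _ _)).ne

lemma distrib_indicator_infiniteLevel {τ : ℝ} (hτ : 0 ≤ τ) :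
    distrib muI ((infiniteLevel y).indicator y) τ = distribAtTop muI y := by
  rw [distrib_indicator _ _ hτ, muI_setOf_lt_abs_inter y (measurableSet_infiniteLevel y) le_rfl,
    muI_infiniteLevel]

lemma distrib_indicator_compl_infiniteLevel {τ : ℝ} (hτ : 0 ≤ τ) :
    distrib muI ((infiniteLevel y)ᶜ.indicator y) τ = distrib muI y τ - distribAtTop muI y := by
  refine ENNReal.eq_sub_of_add_eq distribAtTop_muI_ne_top ?_
  rw [distrib_indicator _ _ hτ, ← muI_infiniteLevel, ← muI_setOf_lt_abs_inter y
    (measurableSet_infiniteLevel y) le_rfl, add_comm]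
  exact measure_inter_add_sdiff _ (measurableSet_infiniteLevel y)

lemma distribAtTop_indicator_compl_infiniteLevel :
    distribAtTop muI ((infiniteLevel y)ᶜ.indicator y) = 0 := by
  simp_rw [distribAtTop, distrib_indicator_compl_infiniteLevel (Nat.cast_nonneg _)]
  exact iInf_tsub_iInf_self distribAtTop_muI_ne_top

end InfiniteLevel

namespace SymmetricSpace

variable (E : SymmetricSpace) {t : ℝ} {y : ℝ → ℝ}

lemma mem_dil_indicator_compl_infiniteLevel (ht : 0 < t) (ht1 : t ≤ 1) (hy : E.Mem y) :
    E.Mem (dil t ((infiniteLevel y)ᶜ.indicator y)) :=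
  E.mem_of_distrib_le (E.mem_indicator hy _) distribAtTop_indicator_compl_infiniteLevel
    fun τ hτ => by
      rw [distrib_dil ht ht1 _ hτ]
      exact mul_le_of_le_one_left zero_le (ENNReal.ofReal_le_one.2 ht1)

/-- `σ_t` of the infinite part is equimeasurable with the restriction of `y` to a slice of
`infiniteLevel y` of relative measure `t`. -/
lemma mem_dil_indicator_infiniteLevel (ht : 0 < t) (ht1 : t ≤ 1) (hy : E.Mem y) :
    E.Mem (dil t ((infiniteLevel y).indicator y)) ∧
      E.N (dil t ((infiniteLevel y).indicator y)) = 0 := by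
  obtain ⟨s, hs⟩ := exists_muI_inter_Iic_eq (infiniteLevel y) ht1
  have hW := (measurableSet_infiniteLevel y).inter (measurableSet_Iic (a := s))
  have hdist : ∀ τ, 0 < τ → distrib muI (dil t ((infiniteLevel y).indicator y)) τ
      = ENNReal.ofReal t * distribAtTop muI y := fun τ hτ => by
    rw [distrib_dil ht ht1 _ hτ.le, distrib_indicator_infiniteLevel hτ.le]
  have hmem : E.Mem (dil t ((infiniteLevel y).indicator y)) :=
    E.symm_mem _ _ (E.mem_indicator hy (infiniteLevel y ∩ Iic s)) fun τ hτ => by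
      rw [hdist τ hτ, distrib_indicator _ _ hτ.le,
        muI_setOf_lt_abs_inter y hW inter_subset_left, hs, muI_infiniteLevel]
  exact ⟨hmem, E.norm_eq_zero_of_distrib_const hmem hdist⟩

lemma norm_dil_eq_norm_dil_indicator_compl_infiniteLevel (ht : 0 < t) (ht1 : t ≤ 1)
    (hy : E.Mem y) :
    E.N (dil t y) = E.N (dil t ((infiniteLevel y)ᶜ.indicator y)) := by
  obtain ⟨hp, hp0⟩ := E.mem_dil_indicator_infiniteLevel ht ht1 hy
  have hsplit : dil t y = dil t ((infiniteLevel y)ᶜ.indicator y)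
      + dil t ((infiniteLevel y).indicator y) := by
    rw [← dil_add, indicator_compl_add_self]
  rw [hsplit, E.norm_add_of_norm_eq_zero (E.mem_dil_indicator_compl_infiniteLevel ht ht1 hy) hp hp0]

lemma N2_tensor_eq_norm_dil_indicator_compl_infiniteLevel (ht : 0 < t) (ht1 : t ≤ 1)
    (hy : E.Mem y) :
    N2 E (tensor ((Ioc (0 : ℝ) t).indicator fun _ => 1) y)
      = E.N (dil t ((infiniteLevel y)ᶜ.indicator y)) :=
  E.symm_norm _ _ (E.mem_dil_indicator_compl_infiniteLevel ht ht1 hy) fun τ hτ => by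
    rw [distrib_rearr prob_le_one _ hτ.le, distrib_tensor_indicator_Ioc ht1 y hτ.le,
      distribAtTop_tensor_indicator_Ioc ht1, ← ENNReal.mul_sub fun _ _ => ENNReal.ofReal_ne_top,
      distrib_dil ht ht1 _ hτ.le, distrib_indicator_compl_infiniteLevel hτ.le]

theorem N2_tensor_indicator_Ioc_eq_norm_dil (ht : 0 < t) (ht1 : t ≤ 1) (hy : E.Mem y) :
    N2 E (tensor ((Ioc (0 : ℝ) t).indicator fun _ => 1) y) = E.N (dil t y) := by
  rw [E.N2_tensor_eq_norm_dil_indicator_compl_infiniteLevel ht ht1 hy,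
    E.norm_dil_eq_norm_dil_indicator_compl_infiniteLevel ht ht1 hy]

end SymmetricSpace

theorem fundamental_function_multiplicator (E : SymmetricSpace) (t : ℝ)
    (ht : t ∈ Set.Ioc (0:ℝ) 1) :
    MN E ((Set.Ioc (0:ℝ) t).indicator fun _ => (1:ℝ)) = opN E t := by
  rw [MN, opN]
  congr 1
  ext r
  exact exists_congr fun y => and_congr_right fun hy => and_congr_right fun _ => by
    rw [E.N2_tensor_indicator_Ioc_eq_norm_dil ht.1 ht.2 hy]
end

section
/- Let 1 < p < ∞, α ∈ ℝ, and ψ_{p,α}(u) = u^{-1/p} ln^{-α}(e/u) on (0,1]. Then there exist constants c, C, v₀ > 0 such that for all v > v₀, the distribution function n_{ψ_{p,α}}(v) = μ{u ∈ (0,1] : ψ_{p,α}(u) > v} satisfies c·v^{-p}ln^{-pα}(v) ≤ n_{ψ_{p,α}}(v) ≤ C·v^{-p}ln^{-pα}(v). -/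
open MeasureTheory Set Filter ENNReal

/-- `ψ_{p,α}(u) = u^{-1/p} ln^{-α}(e/u)` on `(0,1]`, extended by `0`. -/
noncomputable def psiPA (p α : ℝ) : ℝ → ℝ := fun u =>
  if u ∈ Set.Ioc (0:ℝ) 1 then u ^ (-(1/p)) * Real.log (Real.exp 1 / u) ^ (-α) else 0

/-! Substitute `u = e^{-s}` and `L = log v`: then `ψ_{p,α}(u) > v` reads
`s - pα log (1 + s) > pL`. For large `L` every solution has `s ≥ L`; on the window
`L ≤ s ≤ 2pL` the term `log (1 + s)` differs from `log L` by at most `log (3p)`, and beyond `2pL`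
the logarithmic term is negligible. So, with `T = pL + pα log L` and `M = p|α| log (3p)`, the
solutions contain `(T + M, ∞)` and lie in `[T - M, ∞)`, i.e. `{ψ_{p,α} > v}` is squeezed between
`(0, e^{-M} v^{-p} L^{-pα})` and `(0, e^{M} v^{-p} L^{-pα}]`. -/

lemma eventually_mul_log_add_le_mul (a b : ℝ) {ε : ℝ} (hε : 0 < ε) :
    ∀ᶠ x in atTop, a * Real.log x + b ≤ ε * x := by
  have hlo : (fun x => a * Real.log x + b) =o[atTop] id :=
    (Real.isLittleO_log_id_atTop.const_mul_left a).add (Asymptotics.isLittleO_const_id_atTop b)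
  filter_upwards [hlo.def hε, eventually_ge_atTop 0] with x hx hx0
  rw [Real.norm_eq_abs, id, Real.norm_of_nonneg hx0] at hx
  exact (le_abs_self _).trans hx

section LogProfile

variable {p α L s : ℝ}

lemma mul_abs_mul_log_three_mul_nonneg (hp : 1 ≤ p) : 0 ≤ p * |α| * Real.log (3 * p) := by
  have := Real.log_nonneg (by linarith : (1 : ℝ) ≤ 3 * p)
  positivity

lemma log_one_add_le_log_add_log_three_mul (hp : 1 ≤ p) (hL : 1 ≤ L) (hs : 0 ≤ s)
    (hs' : s ≤ 2 * p * L) : Real.log (1 + s) ≤ Real.log L + Real.log (3 * p) := by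
  rw [← Real.log_mul (by positivity) (by positivity)]
  exact Real.log_le_log (by positivity) (by nlinarith)

lemma abs_mul_log_one_add_sub_mul_log_le (hp : 1 ≤ p) (hL : 1 ≤ L) (hLs : L ≤ s)
    (hs : s ≤ 2 * p * L) :
    |p * α * Real.log (1 + s) - p * α * Real.log L| ≤ p * |α| * Real.log (3 * p) := by
  have hlow : Real.log L ≤ Real.log (1 + s) := Real.log_le_log (by positivity) (by linarith)
  have hup := log_one_add_le_log_add_log_three_mul hp hL (by linarith) hs
  rw [← mul_sub, abs_mul, abs_mul, abs_of_pos (by positivity : 0 < p),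
    abs_of_nonneg (sub_nonneg.2 hlow)]
  gcongr
  linarith

lemma neg_mul_log_one_add_le (hp : 1 ≤ p) (hL : 1 ≤ L) (hs : 0 ≤ s) (hs' : s ≤ 2 * p * L) :
    -(p * α * Real.log (1 + s)) ≤ p * |α| * Real.log L + p * |α| * Real.log (3 * p) := by
  have hlog : 0 ≤ Real.log (1 + s) := Real.log_nonneg (by linarith)
  calc -(p * α * Real.log (1 + s)) ≤ p * |α| * Real.log (1 + s) := by
        rw [← neg_mul, ← mul_neg]
        gcongr
        exact neg_le_abs α
    _ ≤ p * |α| * (Real.log L + Real.log (3 * p)) := by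
        gcongr
        exact log_one_add_le_log_add_log_three_mul hp hL hs hs'
    _ = _ := by ring

variable (hp : 1 ≤ p) (hL : 1 ≤ L)
  (hLog : p * |α| * Real.log L + p * |α| * Real.log (3 * p) ≤ (p - 1) * L)
include hp hL hLog

lemma le_threshold_sub : L ≤ p * L + p * α * Real.log L - p * |α| * Real.log (3 * p) := by
  have : p * -|α| * Real.log L ≤ p * α * Real.log L := by
    gcongr
    · exact Real.log_nonneg hL
    · exact neg_abs_le α
  linarith

lemma threshold_add_le :
    p * L + p * α * Real.log L + p * |α| * Real.log (3 * p) ≤ 2 * p * L := by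
  have : p * α * Real.log L ≤ p * |α| * Real.log L := by
    gcongr
    · exact Real.log_nonneg hL
    · exact le_abs_self α
  linarith

lemma threshold_sub_le_of_lt (hs : 0 ≤ s) (h : p * L < s - p * α * Real.log (1 + s)) :
    p * L + p * α * Real.log L - p * |α| * Real.log (3 * p) ≤ s := by
  rcases lt_or_ge (2 * p * L) s with hbig | hsmall
  · linarith [threshold_add_le hp hL hLog, mul_abs_mul_log_three_mul_nonneg (α := α) hp]
  rcases lt_or_ge s L with hlow | hmid
  · linarith [neg_mul_log_one_add_le (α := α) hp hL hs hsmall]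
  · have := (abs_le.1 (abs_mul_log_one_add_sub_mul_log_le (α := α) hp hL hmid hsmall)).1
    linarith

lemma lt_of_threshold_add_lt
    (hbig : ∀ s, L ≤ s → p * |α| * Real.log (1 + s) ≤ s / 2)
    (h : p * L + p * α * Real.log L + p * |α| * Real.log (3 * p) < s) :
    p * L < s - p * α * Real.log (1 + s) := by
  have hLs : L ≤ s := by
    linarith [le_threshold_sub hp hL hLog, mul_abs_mul_log_three_mul_nonneg (α := α) hp]
  rcases lt_or_ge (2 * p * L) s with hs | hs
  · have : p * α * Real.log (1 + s) ≤ p * |α| * Real.log (1 + s) := by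
      gcongr
      · exact Real.log_nonneg (by linarith)
      · exact le_abs_self α
    linarith [hbig s hLs]
  · have := (abs_le.1 (abs_mul_log_one_add_sub_mul_log_le (α := α) hp hL hLs hs)).2
    linarith

end LogProfile

lemma eventually_log_conditions {p : ℝ} (α : ℝ) (hp : 1 < p) :
    ∀ᶠ L in atTop, 1 ≤ L ∧
      p * |α| * Real.log L + p * |α| * Real.log (3 * p) ≤ (p - 1) * L ∧
      ∀ s, L ≤ s → p * |α| * Real.log (1 + s) ≤ s / 2 := by
  have hbig : ∀ᶠ s in atTop, p * |α| * Real.log (1 + s) ≤ s / 2 := by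
    have h := (tendsto_atTop_add_const_left atTop 1 tendsto_id).eventually
      (eventually_mul_log_add_le_mul (p * |α|) 0 (by norm_num : (0 : ℝ) < 1 / 4))
    filter_upwards [h, eventually_ge_atTop 1] with s hs hs1
    simp only [id, add_zero] at hs
    linarith
  filter_upwards [eventually_ge_atTop 1,
    eventually_mul_log_add_le_mul (p * |α|) (p * |α| * Real.log (3 * p)) (sub_pos.2 hp),
    eventually_forall_ge_atTop.2 hbig] with L hL hLog hbig
  exact ⟨hL, hLog, hbig⟩

lemma log_exp_one_div {u : ℝ} (hu : 0 < u) : Real.log (Real.exp 1 / u) = 1 - Real.log u := by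
  rw [Real.log_div (Real.exp_ne_zero 1) hu.ne', Real.log_exp]

lemma psiPA_pos {p α u : ℝ} (hu : u ∈ Ioc (0 : ℝ) 1) : 0 < psiPA p α u := by
  have hlog : 0 < 1 - Real.log u := by linarith [Real.log_nonpos hu.1.le hu.2]
  rw [psiPA, if_pos hu, log_exp_one_div hu.1]
  exact mul_pos (Real.rpow_pos_of_pos hu.1 _) (Real.rpow_pos_of_pos hlog _)

lemma mem_Ioc_of_lt_psiPA {p α u v : ℝ} (hv : 0 ≤ v) (h : v < psiPA p α u) :
    u ∈ Ioc (0 : ℝ) 1 := by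
  by_contra hu
  rw [psiPA, if_neg hu] at h
  linarith

lemma distrib_muI_psiPA {p α v : ℝ} (hv : 0 ≤ v) :
    distrib muI (psiPA p α) v = volume {u | v < psiPA p α u} := by
  rw [distrib, muI, Measure.restrict_apply' measurableSet_Icc]
  congr 1
  ext u
  show v < |psiPA p α u| ∧ u ∈ Icc 0 1 ↔ v < psiPA p α u
  constructor
  · rintro ⟨hlt, -⟩
    by_cases hu : u ∈ Ioc (0 : ℝ) 1
    · rwa [abs_of_pos (psiPA_pos hu)] at hlt
    · rw [psiPA, if_neg hu, abs_zero] at hlt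
      exact absurd hlt hv.not_gt
  · intro hlt
    exact ⟨hlt.trans_le (le_abs_self _), Ioc_subset_Icc_self (mem_Ioc_of_lt_psiPA hv hlt)⟩

lemma lt_psiPA_iff {p α u v : ℝ} (hp : 0 < p) (hv : 0 < v) (hu : u ∈ Ioc (0 : ℝ) 1) :
    v < psiPA p α u ↔
      p * Real.log v < -Real.log u - p * α * Real.log (1 + -Real.log u) := by
  have hlog : 0 < 1 - Real.log u := by linarith [Real.log_nonpos hu.1.le hu.2]
  have hψ : p * Real.log (psiPA p α u) = -Real.log u - p * α * Real.log (1 + -Real.log u) := by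
    rw [psiPA, if_pos hu, log_exp_one_div hu.1, ← sub_eq_add_neg,
      Real.log_mul (Real.rpow_pos_of_pos hu.1 _).ne' (Real.rpow_pos_of_pos hlog _).ne',
      Real.log_rpow hu.1, Real.log_rpow hlog]
    field_simp
    ring
  rw [← Real.log_lt_log_iff hv (psiPA_pos hu), ← mul_lt_mul_iff_of_pos_left hp, hψ]

lemma rpow_neg_mul_log_rpow_neg {v : ℝ} (p α : ℝ) (hv : 1 < v) :
    v ^ (-p) * Real.log v ^ (-(p * α)) =
      Real.exp (-(p * Real.log v + p * α * Real.log (Real.log v))) := by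
  rw [Real.rpow_def_of_pos (by linarith), Real.rpow_def_of_pos (Real.log_pos hv), ← Real.exp_add]
  ring_nf

section Sandwich

variable {p α v : ℝ} (hp : 1 ≤ p) (hv : 0 < v) (hL : 1 ≤ Real.log v)
  (hLog : p * |α| * Real.log (Real.log v) + p * |α| * Real.log (3 * p) ≤ (p - 1) * Real.log v)
include hp hv hL hLog

lemma Ioo_subset_setOf_lt_psiPA
    (hbig : ∀ s, Real.log v ≤ s → p * |α| * Real.log (1 + s) ≤ s / 2) :
    Ioo 0 (Real.exp (-(p * Real.log v + p * α * Real.log (Real.log v) +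
      p * |α| * Real.log (3 * p)))) ⊆ {u | v < psiPA p α u} := by
  rintro u ⟨hu0, hua⟩
  have hs : p * Real.log v + p * α * Real.log (Real.log v) + p * |α| * Real.log (3 * p) <
      -Real.log u := by
    have := Real.log_lt_log hu0 hua
    rw [Real.log_exp] at this
    linarith
  have hs1 : 1 < -Real.log u := by
    linarith [le_threshold_sub hp hL hLog, mul_abs_mul_log_three_mul_nonneg (α := α) hp]
  have hu1 : u ∈ Ioc (0 : ℝ) 1 := ⟨hu0, ((Real.log_neg_iff hu0).1 (by linarith)).le⟩
  exact (lt_psiPA_iff (by linarith) hv hu1).2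
    (lt_of_threshold_add_lt hp hL hLog hbig hs)

lemma setOf_lt_psiPA_subset_Ioc :
    {u | v < psiPA p α u} ⊆ Ioc 0 (Real.exp (-(p * Real.log v + p * α * Real.log (Real.log v) -
      p * |α| * Real.log (3 * p)))) := by
  intro u hu
  have hu1 := mem_Ioc_of_lt_psiPA hv.le hu
  have hs := threshold_sub_le_of_lt hp hL hLog
    (neg_nonneg.2 (Real.log_nonpos hu1.1.le hu1.2))
    ((lt_psiPA_iff (by linarith) hv hu1).1 hu)
  exact ⟨hu1.1, (Real.log_le_iff_le_exp hu1.1).1 (by linarith)⟩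

end Sandwich

lemma eventually_distrib_psiPA_bounds {p : ℝ} (α : ℝ) (hp : 1 < p) :
    ∀ᶠ v in atTop,
      ENNReal.ofReal (Real.exp (-(p * |α| * Real.log (3 * p))) *
          (v ^ (-p) * Real.log v ^ (-(p * α)))) ≤ distrib muI (psiPA p α) v ∧
      distrib muI (psiPA p α) v ≤
        ENNReal.ofReal (Real.exp (p * |α| * Real.log (3 * p)) *
          (v ^ (-p) * Real.log v ^ (-(p * α)))) := by
  filter_upwards [Real.tendsto_log_atTop.eventually (eventually_log_conditions α hp),
    eventually_gt_atTop 1] with v ⟨hL, hLog, hbig⟩ hv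
  have hv0 : 0 < v := zero_lt_one.trans hv
  rw [distrib_muI_psiPA hv0.le, rpow_neg_mul_log_rpow_neg p α hv, ← Real.exp_add,
    ← Real.exp_add]
  constructor
  · calc _ = volume (Ioo 0 (Real.exp (-(p * Real.log v + p * α * Real.log (Real.log v) +
          p * |α| * Real.log (3 * p))))) := by
          rw [Real.volume_Ioo, sub_zero]
          ring_nf
      _ ≤ _ := measure_mono (Ioo_subset_setOf_lt_psiPA hp.le hv0 hL hLog hbig)
  · calc _ ≤ volume (Ioc 0 (Real.exp (-(p * Real.log v + p * α * Real.log (Real.log v) -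
          p * |α| * Real.log (3 * p))))) :=
          measure_mono (setOf_lt_psiPA_subset_Ioc hp.le hv0 hL hLog)
      _ = _ := by
          rw [Real.volume_Ioc, sub_zero]
          ring_nf

lemma exists_pos_forall_gt_of_eventually_atTop {P : ℝ → Prop} (h : ∀ᶠ v in atTop, P v) :
    ∃ v₀, 0 < v₀ ∧ ∀ v, v₀ < v → P v := by
  obtain ⟨N, hN⟩ := eventually_atTop.1 h
  exact ⟨max N 1, by positivity, fun v hv => hN v (le_max_left N 1 |>.trans hv.le)⟩

theorem distrib_psiPA_equiv (p α : ℝ) (hp : 1 < p) :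
    ∃ c C v₀ : ℝ, 0 < c ∧ 0 < C ∧ 0 < v₀ ∧ ∀ v : ℝ, v₀ < v →
      ENNReal.ofReal (c * (v ^ (-p) * Real.log v ^ (-(p * α)))) ≤
        distrib muI (psiPA p α) v ∧
      distrib muI (psiPA p α) v ≤
        ENNReal.ofReal (C * (v ^ (-p) * Real.log v ^ (-(p * α)))) := by
  obtain ⟨v₀, hv₀, hbounds⟩ :=
    exists_pos_forall_gt_of_eventually_atTop (eventually_distrib_psiPA_bounds α hp)
  exact ⟨_, _, v₀, Real.exp_pos _, Real.exp_pos _, hv₀, hbounds⟩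
end
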